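/- Let f : S^{3×3} → ℝ be a quadratic form. Then the following three statements are equivalent: (i) f is symmetric polyconvex; (ii) there exist a convex quadratic form h : S^{3×3} → ℝ and a positive semi-definite matrix A ∈ S^{3×3} such that f(ε) = h(ε) − A:cof ε for all ε ∈ S^{3×3}; (iii) there exists a positive semi-definite matrix A ∈ S^{3×3} such that f(ε) + A:cof ε ≥ 0 for all ε ∈ S^{3×3}. -/

import Mathlib

open Matrix

/-- The symmetric part `(F + Fᵀ)/2` of a 3×3 matrix. -/
noncomputable def symPart (F : Matrix (Fin 3) (Fin 3) ℝ) : Matrix (Fin 3) (Fin 3) ℝ :=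
  (1 / 2 : ℝ) • (F + Fᵀ)

/-- The cofactor matrix: `(cof F)_{ij} = (-1)^{i+j}` times the determinant of the 2×2
matrix obtained from `F` by deleting row `i` and column `j`. -/
noncomputable def cof (F : Matrix (Fin 3) (Fin 3) ℝ) : Matrix (Fin 3) (Fin 3) ℝ :=
  Matrix.of fun i j =>
    (-1 : ℝ) ^ ((i : ℕ) + (j : ℕ)) * (F.submatrix i.succAbove j.succAbove).det

/-- Frobenius inner product `A:B = Σ_{i,j} A_{ij} B_{ij}` of 3×3 matrices. -/
def mdot (A B : Matrix (Fin 3) (Fin 3) ℝ) : ℝ := ∑ i, ∑ j, A i j * B i j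

/-- A function `W : ℝ^{3×3} → ℝ` is polyconvex if there is a convex function
`G : ℝ^{3×3} × ℝ^{3×3} × ℝ → ℝ` with `W F = G (F, cof F, det F)` for all `F`. -/
def Polyconvex3 (W : Matrix (Fin 3) (Fin 3) ℝ → ℝ) : Prop :=
  ∃ G : Matrix (Fin 3) (Fin 3) ℝ × Matrix (Fin 3) (Fin 3) ℝ × ℝ → ℝ,
    ConvexOn ℝ Set.univ G ∧ ∀ F : Matrix (Fin 3) (Fin 3) ℝ, W F = G (F, cof F, F.det)

/-- `f : S^{3×3} → ℝ` is symmetric polyconvex if `F ↦ f (Fˢ)` is polyconvex. -/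
def SymPolyconvex3 (f : Matrix (Fin 3) (Fin 3) ℝ → ℝ) : Prop :=
  Polyconvex3 (fun F => f (symPart F))

/-- `B ∈ S^{3×3}` is negative semi-definite: `Bx·x ≤ 0` for all `x ∈ ℝ³`. -/
def NegSemidefM (B : Matrix (Fin 3) (Fin 3) ℝ) : Prop :=
  ∀ x : Fin 3 → ℝ, B.mulVec x ⬝ᵥ x ≤ 0

/-- `A ∈ S^{3×3}` is positive semi-definite: `Ax·x ≥ 0` for all `x ∈ ℝ³`. -/
def PosSemidefM (A : Matrix (Fin 3) (Fin 3) ℝ) : Prop :=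
  ∀ x : Fin 3 → ℝ, 0 ≤ A.mulVec x ⬝ᵥ x

/-- The symmetrized tensor product `a ⊙ b = (a⊗b + b⊗a)/2`. -/
noncomputable def symProd (a b : Fin 3 → ℝ) : Matrix (Fin 3) (Fin 3) ℝ :=
  (1 / 2 : ℝ) • (vecMulVec a b + vecMulVec b a)

/-- `f : S^{3×3} → ℝ` is symmetric rank-one convex if `t ↦ f (ε + t a⊙b)` is convex
for every symmetric `ε` and all `a, b ∈ ℝ³`. -/
def SymRankOneConvex3 (f : Matrix (Fin 3) (Fin 3) ℝ → ℝ) : Prop :=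
  ∀ ε : Matrix (Fin 3) (Fin 3) ℝ, ε.IsSymm → ∀ a b : Fin 3 → ℝ,
    ConvexOn ℝ Set.univ (fun t : ℝ => f (ε + t • symProd a b))

/-- `f` is a quadratic form on `S^{3×3}`: `f ε = B ε ε` on symmetric matrices for some
symmetric bilinear form `B`. -/
def IsSymQuadForm3 (f : Matrix (Fin 3) (Fin 3) ℝ → ℝ) : Prop :=
  ∃ B : Matrix (Fin 3) (Fin 3) ℝ →ₗ[ℝ] Matrix (Fin 3) (Fin 3) ℝ →ₗ[ℝ] ℝ,
    (∀ X Y, B X Y = B Y X) ∧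
    ∀ ε : Matrix (Fin 3) (Fin 3) ℝ, ε.IsSymm → f ε = B ε ε


/-! (i) ⇒ (iii): a convex `G` with `f (Fˢ) = G (F, cof F, det F)` has an affine minorant `ℓ + c`.
Since `f` is 2-homogeneous, `cof` even and `det` odd, averaging the minorant at `±tF` and letting
`t → ∞` leaves `f (Fˢ) + A₀ : cof F ≥ 0` for every `F`. For skew `F` this reads `A₀ x · x ≥ 0`,
because `Fˢ = 0` and `cof F = x ⊗ x` with `x` the axial vector of `F`; take `A = A₀ˢ`.

(iii) ⇒ (ii): `h = f + A : cof` is a quadratic form that is nonnegative, hence convex, on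
`S^{3×3}`.

(ii) ⇒ (i): for symmetric `A`, `A : cof F = A : cof Fˢ + A w · w` with `w` the axial vector of
the skew part of `F`, so `f (Fˢ) = h (Fˢ) + A w · w - A : cof F` is a convex function of
`(F, cof F)`. -/

theorem ConvexOn.exists_affine_le {E : Type*} [NormedAddCommGroup E] [NormedSpace ℝ E]
    [FiniteDimensional ℝ E] {G : E → ℝ} (hG : ConvexOn ℝ Set.univ G) :
    ∃ (ℓ : E →L[ℝ] ℝ) (c : ℝ), ∀ x, ℓ x + c ≤ G x := by
  have hcont : LowerSemicontinuousOn G Set.univ :=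
    (hG.continuousOn isOpen_univ).lowerSemicontinuousOn
  obtain ⟨ℓ, c, hle, -⟩ := hG.exists_affine_le_of_lt (𝕜 := ℝ) (Set.mem_univ 0)
    (sub_one_lt (G 0)) isClosed_univ hcont
  exact ⟨ℓ, c, fun x => by simpa using hle ⟨x, Set.mem_univ x⟩⟩

theorem LinearMap.convexOn_apply_self {M : Type*} [AddCommGroup M] [Module ℝ M]
    (B : M →ₗ[ℝ] M →ₗ[ℝ] ℝ) {s : Set M} (hs : Convex ℝ s)
    (hB : ∀ x ∈ s, ∀ y ∈ s, 0 ≤ B (x - y) (x - y)) : ConvexOn ℝ s fun x => B x x := by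
  refine ⟨hs, fun x hx y hy a b ha hb hab => ?_⟩
  have hdiff : a * B x x + b * B y y - B (a • x + b • y) (a • x + b • y)
      = a * b * B (x - y) (x - y) := by
    obtain rfl : b = 1 - a := by linarith
    simp only [map_add, map_sub, LinearMap.add_apply, LinearMap.sub_apply,
      LinearMap.smul_apply, map_smul, smul_eq_mul]
    ring
  have := mul_nonneg (mul_nonneg ha hb) (hB x hx y hy)
  simp only [smul_eq_mul]
  linarith

theorem nonneg_of_forall_pos_le_mul {α : Type*} [Field α] [LinearOrder α] [IsStrictOrderedRing α]
    {c d : α} (h : ∀ s > 0, c ≤ s * d) : 0 ≤ d := by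
  by_contra! hd
  have := h ((|c| + 1) / -d) (div_pos (by positivity) (neg_pos.mpr hd))
  rw [div_mul_eq_mul_div, div_neg, mul_div_cancel_right₀ _ hd.ne] at this
  linarith [neg_abs_le c]

theorem Matrix.convex_setOf_isSymm {n : Type*} : Convex ℝ {ε : Matrix n n ℝ | ε.IsSymm} :=
  fun _ hx _ hy a b _ _ _ => (hx.smul a).add (hy.smul b)

namespace Matrix

variable {A C F ε : Matrix (Fin 3) (Fin 3) ℝ}

noncomputable def symPartₗ : Matrix (Fin 3) (Fin 3) ℝ →ₗ[ℝ] Matrix (Fin 3) (Fin 3) ℝ where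
  toFun := symPart
  map_add' X Y := by simp only [symPart, transpose_add]; module
  map_smul' c X := by simp only [symPart, transpose_smul, RingHom.id_apply]; module

@[simp] theorem symPartₗ_apply : symPartₗ F = symPart F := rfl

theorem isSymm_symPart (F : Matrix (Fin 3) (Fin 3) ℝ) : (symPart F).IsSymm := by
  simp only [IsSymm, symPart, transpose_smul, transpose_add, transpose_transpose, add_comm]

theorem IsSymm.symPart_eq (hε : ε.IsSymm) : symPart ε = ε := by
  rw [symPart, hε.eq]; module

theorem cof_fin_three (F : Matrix (Fin 3) (Fin 3) ℝ) :
    cof F = !![F 1 1 * F 2 2 - F 1 2 * F 2 1, F 1 2 * F 2 0 - F 1 0 * F 2 2,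
      F 1 0 * F 2 1 - F 1 1 * F 2 0;
      F 0 2 * F 2 1 - F 0 1 * F 2 2, F 0 0 * F 2 2 - F 0 2 * F 2 0,
      F 0 1 * F 2 0 - F 0 0 * F 2 1;
      F 0 1 * F 1 2 - F 0 2 * F 1 1, F 0 2 * F 1 0 - F 0 0 * F 1 2,
      F 0 0 * F 1 1 - F 0 1 * F 1 0] := by
  ext i j
  fin_cases i <;> fin_cases j <;> simp [cof, det_fin_two, Fin.succAbove] <;> ring

theorem cof_smul (t : ℝ) (F : Matrix (Fin 3) (Fin 3) ℝ) : cof (t • F) = t ^ 2 • cof F := by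
  ext i j
  have hsub : (t • F).submatrix i.succAbove j.succAbove = t • F.submatrix i.succAbove j.succAbove :=
    rfl
  simp only [cof, of_apply, hsub, det_smul, Fintype.card_fin, smul_apply, smul_eq_mul]
  ring

theorem cof_transpose (F : Matrix (Fin 3) (Fin 3) ℝ) : cof Fᵀ = (cof F)ᵀ := by
  ext i j
  simp only [cof, of_apply, transpose_apply, ← transpose_submatrix, det_transpose, add_comm]

theorem IsSymm.cof (hε : ε.IsSymm) : (cof ε).IsSymm := by
  rw [IsSymm, ← cof_transpose, hε.eq]

def mdotₗ (A : Matrix (Fin 3) (Fin 3) ℝ) : Matrix (Fin 3) (Fin 3) ℝ →ₗ[ℝ] ℝ where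
  toFun := mdot A
  map_add' X Y := by simp only [mdot, add_apply, mul_add, Finset.sum_add_distrib]
  map_smul' c X := by
    simp only [mdot, smul_apply, smul_eq_mul, RingHom.id_apply, Finset.mul_sum, mul_left_comm]

@[simp] theorem mdotₗ_apply : mdotₗ A C = mdot A C := rfl

theorem exists_mdot_eq (ℓ : Matrix (Fin 3) (Fin 3) ℝ →ₗ[ℝ] ℝ) :
    ∃ A, ∀ C, ℓ C = mdot A C := by
  refine ⟨of fun i j => ℓ (single i j 1), fun C => ?_⟩
  conv_lhs => rw [matrix_eq_sum_single C]
  simp only [map_sum, mdot, of_apply]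
  refine Finset.sum_congr rfl fun i _ => Finset.sum_congr rfl fun j _ => ?_
  have hCij : single i j (C i j) = C i j • single i j (1 : ℝ) := by
    rw [smul_single, smul_eq_mul, mul_one]
  rw [hCij, map_smul, smul_eq_mul, mul_comm]

theorem mdot_symPart (A : Matrix (Fin 3) (Fin 3) ℝ) (hC : C.IsSymm) :
    mdot (symPart A) C = mdot A C := by
  simp only [mdot, Fin.sum_univ_three, symPart, smul_apply, add_apply, transpose_apply,
    smul_eq_mul]
  rw [hC.apply 1 0, hC.apply 2 0, hC.apply 2 1]
  ring

theorem symPart_mulVec_dotProduct_self (A : Matrix (Fin 3) (Fin 3) ℝ) (x : Fin 3 → ℝ) :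
    symPart A *ᵥ x ⬝ᵥ x = A *ᵥ x ⬝ᵥ x := by
  simp only [dotProduct, mulVec, symPart, smul_apply, add_apply, transpose_apply, smul_eq_mul,
    Fin.sum_univ_three]
  ring

theorem mdot_vecMulVec_self (A : Matrix (Fin 3) (Fin 3) ℝ) (x : Fin 3 → ℝ) :
    mdot A (vecMulVec x x) = A *ᵥ x ⬝ᵥ x := by
  simp only [mdot, vecMulVec_apply, mulVec, dotProduct, Finset.sum_mul]
  exact Finset.sum_congr rfl fun i _ => Finset.sum_congr rfl fun j _ => by ring

def crossMatrix (x : Fin 3 → ℝ) : Matrix (Fin 3) (Fin 3) ℝ :=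
  !![0, -x 2, x 1; x 2, 0, -x 0; -x 1, x 0, 0]

theorem symPart_crossMatrix (x : Fin 3 → ℝ) : symPart (crossMatrix x) = 0 := by
  ext i j
  fin_cases i <;> fin_cases j <;> simp [symPart, crossMatrix]

theorem cof_crossMatrix (x : Fin 3 → ℝ) : cof (crossMatrix x) = vecMulVec x x := by
  ext i j
  fin_cases i <;> fin_cases j <;> simp [cof_fin_three, crossMatrix, vecMulVec_apply] <;> ring

noncomputable def axialₗ : Matrix (Fin 3) (Fin 3) ℝ →ₗ[ℝ] Fin 3 → ℝ where
  toFun F := ![(F 2 1 - F 1 2) / 2, (F 0 2 - F 2 0) / 2, (F 1 0 - F 0 1) / 2]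
  map_add' X Y := by ext i; fin_cases i <;> simp <;> ring
  map_smul' c X := by ext i; fin_cases i <;> simp <;> ring

theorem mdot_cof_eq_mdot_cof_symPart_add (hA : A.IsSymm) (F : Matrix (Fin 3) (Fin 3) ℝ) :
    mdot A (cof F) = mdot A (cof (symPart F)) + A *ᵥ axialₗ F ⬝ᵥ axialₗ F := by
  simp only [mdot, cof_fin_three, symPart, axialₗ, LinearMap.coe_mk, AddHom.coe_mk, mulVec,
    dotProduct, Fin.sum_univ_three, add_apply, smul_apply, smul_eq_mul, transpose_apply, of_apply,
    cons_val', cons_val_zero, cons_val_one, cons_val, cons_val_fin_one]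
  rw [hA.apply 1 0, hA.apply 2 0, hA.apply 2 1]
  ring

noncomputable def cofPolar (A : Matrix (Fin 3) (Fin 3) ℝ) :
    Matrix (Fin 3) (Fin 3) ℝ →ₗ[ℝ] Matrix (Fin 3) (Fin 3) ℝ →ₗ[ℝ] ℝ :=
  LinearMap.mk₂ ℝ (fun X Y => (mdot A (cof (X + Y)) - mdot A (cof X) - mdot A (cof Y)) / 2)
    (fun X X' Y => by
      simp only [mdot, cof_fin_three, Fin.sum_univ_three, add_apply, of_apply, cons_val',
        cons_val_zero, cons_val_one, cons_val, cons_val_fin_one]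
      ring)
    (fun c X Y => by
      simp only [mdot, cof_fin_three, Fin.sum_univ_three, add_apply, smul_apply, smul_eq_mul,
        of_apply, cons_val', cons_val_zero, cons_val_one, cons_val, cons_val_fin_one]
      ring)
    (fun X Y Y' => by
      simp only [mdot, cof_fin_three, Fin.sum_univ_three, add_apply, of_apply, cons_val',
        cons_val_zero, cons_val_one, cons_val, cons_val_fin_one]
      ring)
    (fun c X Y => by
      simp only [mdot, cof_fin_three, Fin.sum_univ_three, add_apply, smul_apply, smul_eq_mul,
        of_apply, cons_val', cons_val_zero, cons_val_one, cons_val, cons_val_fin_one]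
      ring)

theorem cofPolar_comm (A X Y : Matrix (Fin 3) (Fin 3) ℝ) : cofPolar A X Y = cofPolar A Y X := by
  simp only [cofPolar, LinearMap.mk₂_apply, add_comm X Y, sub_right_comm]

theorem cofPolar_self (A X : Matrix (Fin 3) (Fin 3) ℝ) : cofPolar A X X = mdot A (cof X) := by
  rw [cofPolar, LinearMap.mk₂_apply, ← two_smul ℝ X, cof_smul, ← mdotₗ_apply, map_smul]
  simp only [mdotₗ_apply, smul_eq_mul]
  ring

end Matrix

open Matrix

theorem PosSemidefM.convexOn {A : Matrix (Fin 3) (Fin 3) ℝ} (hA : PosSemidefM A) :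
    ConvexOn ℝ Set.univ fun x => A *ᵥ x ⬝ᵥ x := by
  simpa only [toLinearMap₂'_apply', dotProduct_comm] using
    (toLinearMap₂' ℝ A).convexOn_apply_self convex_univ fun x _ y _ => by
      simpa only [toLinearMap₂'_apply', dotProduct_comm] using hA (x - y)

variable {f : Matrix (Fin 3) (Fin 3) ℝ → ℝ}

theorem IsSymQuadForm3.map_smul (hf : IsSymQuadForm3 f) (t : ℝ) {ε : Matrix (Fin 3) (Fin 3) ℝ}
    (hε : ε.IsSymm) : f (t • ε) = t ^ 2 * f ε := by
  obtain ⟨B, -, hfB⟩ := hf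
  rw [hfB _ (hε.smul t), hfB ε hε]
  simp only [_root_.map_smul, LinearMap.smul_apply, smul_eq_mul]
  ring

theorem IsSymQuadForm3.map_zero (hf : IsSymQuadForm3 f) : f 0 = 0 := by
  simpa using hf.map_smul 0 isSymm_zero

theorem IsSymQuadForm3.add_mdot_cof (hf : IsSymQuadForm3 f) (A : Matrix (Fin 3) (Fin 3) ℝ) :
    IsSymQuadForm3 fun ε => f ε + mdot A (cof ε) := by
  obtain ⟨B, hBsymm, hfB⟩ := hf
  exact ⟨B + cofPolar A, fun X Y => by simp [hBsymm X Y, cofPolar_comm A X Y],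
    fun ε hε => by simp [hfB ε hε, cofPolar_self]⟩

theorem IsSymQuadForm3.convexOn_of_nonneg (hf : IsSymQuadForm3 f)
    (hnonneg : ∀ ε : Matrix (Fin 3) (Fin 3) ℝ, ε.IsSymm → 0 ≤ f ε) :
    ConvexOn ℝ {ε : Matrix (Fin 3) (Fin 3) ℝ | ε.IsSymm} f := by
  obtain ⟨B, -, hfB⟩ := hf
  refine (B.convexOn_apply_self convex_setOf_isSymm fun x hx y hy => ?_).congr
    fun ε hε => (hfB ε hε).symm
  rw [← hfB _ (hx.sub hy)]
  exact hnonneg _ (hx.sub hy)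

attribute [local instance] Matrix.normedAddCommGroup Matrix.normedSpace in
theorem Polyconvex3.exists_nonneg_add_mdot_cof {W : Matrix (Fin 3) (Fin 3) ℝ → ℝ}
    (hW : Polyconvex3 W) (hhom : ∀ (t : ℝ) F, W (t • F) = t ^ 2 * W F) :
    ∃ A, ∀ F, 0 ≤ W F + mdot A (cof F) := by
  obtain ⟨G, hG, hWG⟩ := hW
  obtain ⟨ℓ, c, hℓ⟩ := hG.exists_affine_le
  obtain ⟨A, hA⟩ := exists_mdot_eq
    (-(ℓ.toLinearMap ∘ₗ LinearMap.inr ℝ _ _ ∘ₗ LinearMap.inl ℝ (Matrix (Fin 3) (Fin 3) ℝ) ℝ))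
  simp only [LinearMap.neg_apply, LinearMap.comp_apply, LinearMap.inl_apply,
    LinearMap.inr_apply, ContinuousLinearMap.coe_coe, neg_eq_iff_eq_neg] at hA
  refine ⟨A, fun F => nonneg_of_forall_pos_le_mul (c := c) fun s hs => ?_⟩
  obtain ⟨t, rfl⟩ : ∃ t, s = t ^ 2 := ⟨√s, (Real.sq_sqrt hs.le).symm⟩
  have hplus := hℓ (t • F, cof (t • F), (t • F).det)
  have hminus := hℓ ((-t) • F, cof ((-t) • F), ((-t) • F).det)
  rw [← hWG, hhom] at hplus hminus
  have hsum : (t • F, cof (t • F), (t • F).det) + ((-t) • F, cof ((-t) • F), ((-t) • F).det)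
      = (2 * t ^ 2) • ((0 : Matrix (Fin 3) (Fin 3) ℝ), cof F, (0 : ℝ)) := by
    simp only [cof_smul, det_smul, Fintype.card_fin, Prod.mk_add_mk, Prod.smul_mk, smul_zero]
    exact Prod.ext (by module) (Prod.ext (by module) (by ring))
  have hℓsum := congrArg ℓ hsum
  rw [map_add, map_smul, hA, smul_eq_mul] at hℓsum
  nlinarith

theorem SymPolyconvex3.exists_posSemidefM (hf : IsSymQuadForm3 f) (hpc : SymPolyconvex3 f) :
    ∃ A : Matrix (Fin 3) (Fin 3) ℝ, A.IsSymm ∧ PosSemidefM A ∧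
      ∀ ε : Matrix (Fin 3) (Fin 3) ℝ, ε.IsSymm → 0 ≤ f ε + mdot A (cof ε) := by
  obtain ⟨A, hA⟩ := Polyconvex3.exists_nonneg_add_mdot_cof hpc fun t F => by
    rw [← symPartₗ_apply, _root_.map_smul, symPartₗ_apply, hf.map_smul t (isSymm_symPart F)]
  refine ⟨symPart A, isSymm_symPart A, fun x => ?_, fun ε hε => ?_⟩
  · have hx := hA (crossMatrix x)
    rwa [symPart_crossMatrix, hf.map_zero, zero_add, cof_crossMatrix, mdot_vecMulVec_self,
      ← symPart_mulVec_dotProduct_self] at hx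
  · simpa only [mdot_symPart A hε.cof, hε.symPart_eq] using hA ε

theorem symPolyconvex3_of_eq_sub_mdot_cof {h : Matrix (Fin 3) (Fin 3) ℝ → ℝ}
    {A : Matrix (Fin 3) (Fin 3) ℝ} (hh : ConvexOn ℝ {ε : Matrix (Fin 3) (Fin 3) ℝ | ε.IsSymm} h)
    (hA : A.IsSymm) (hApsd : PosSemidefM A)
    (hfh : ∀ ε : Matrix (Fin 3) (Fin 3) ℝ, ε.IsSymm → f ε = h ε - mdot A (cof ε)) :
    SymPolyconvex3 f := by
  have hsym : ConvexOn ℝ Set.univ fun F => h (symPart F) :=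
    (hh.comp_linearMap symPartₗ).subset (fun F _ => isSymm_symPart F) convex_univ
  have hskew : ConvexOn ℝ Set.univ fun F => A *ᵥ axialₗ F ⬝ᵥ axialₗ F :=
    hApsd.convexOn.comp_linearMap axialₗ
  refine ⟨fun p => h (symPart p.1) + A *ᵥ axialₗ p.1 ⬝ᵥ axialₗ p.1 - mdot A p.2.1, ?_, fun F => ?_⟩
  · exact ((hsym.add hskew).comp_linearMap (LinearMap.fst ℝ _ _)).sub
      ((mdotₗ A ∘ₗ LinearMap.fst ℝ _ _ ∘ₗ LinearMap.snd ℝ _ _).concaveOn convex_univ)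
  · dsimp only
    rw [hfh _ (isSymm_symPart F), mdot_cof_eq_mdot_cof_symPart_add hA F]
    ring

/-- Characterization of symmetric polyconvex quadratic forms in 3d. -/
theorem symmetric_polyconvex_quadratic_forms_3d (f : Matrix (Fin 3) (Fin 3) ℝ → ℝ)
    (hf : IsSymQuadForm3 f) :
    (SymPolyconvex3 f ↔
      ∃ h : Matrix (Fin 3) (Fin 3) ℝ → ℝ, IsSymQuadForm3 h ∧
        ConvexOn ℝ {ε : Matrix (Fin 3) (Fin 3) ℝ | ε.IsSymm} h ∧
        ∃ A : Matrix (Fin 3) (Fin 3) ℝ, A.IsSymm ∧ PosSemidefM A ∧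
          ∀ ε : Matrix (Fin 3) (Fin 3) ℝ, ε.IsSymm → f ε = h ε - mdot A (cof ε)) ∧
    (SymPolyconvex3 f ↔
      ∃ A : Matrix (Fin 3) (Fin 3) ℝ, A.IsSymm ∧ PosSemidefM A ∧
        ∀ ε : Matrix (Fin 3) (Fin 3) ℝ, ε.IsSymm → 0 ≤ f ε + mdot A (cof ε)) := by
  refine ⟨⟨fun hpc => ?_, ?_⟩, ⟨fun hpc => hpc.exists_posSemidefM hf, ?_⟩⟩
  · obtain ⟨A, hA, hApsd, hnonneg⟩ := hpc.exists_posSemidefM hf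
    exact ⟨_, hf.add_mdot_cof A, (hf.add_mdot_cof A).convexOn_of_nonneg hnonneg, A, hA, hApsd,
      fun _ _ => by ring⟩
  · rintro ⟨h, -, hh, A, hA, hApsd, hfh⟩
    exact symPolyconvex3_of_eq_sub_mdot_cof hh hA hApsd hfh
  · rintro ⟨A, hA, hApsd, hnonneg⟩
    exact symPolyconvex3_of_eq_sub_mdot_cof ((hf.add_mdot_cof A).convexOn_of_nonneg hnonneg)
      hA hApsd fun _ _ => by ring
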